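/- Let $\sigma \in (5/3, 2)$ and define, for $\mathrm{Re}(z) < 0$, $M(z) = \sum_{j=0}^2 c_j \int_0^\infty \big[(1+\eta)^z - 1\big]\,\eta^{-(\sigma - j/3)}\,d\eta$ with $c_0 = c_2 = 1$, $c_1 = 2$. Then $M$ extends meromorphically to $\mathbb{C}$ and is given by $M(z) = \frac{z}{\Gamma(1-z)} \sum_{j=0}^2 c_j\,\frac{\Gamma(2 + j/3 - \sigma)\,\Gamma(\sigma - j/3 - 1 - z)}{\sigma - j/3 - 1}$. -/

import Mathlib

/-! Every summand is the same integral with exponent `s = σ - j/3 ∈ (1, 2)`. Since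
`|(1 + η)^z - 1| ≤ min (|z| η) 2` for `Re z ≤ 0`, integrating by parts against `η^(1-s)/(1-s)`
leaves no boundary terms and gives `z/(s-1) ∫ (1+η)^(z-1) η^(1-s) dη`; the substitution
`η = x/(1-x)` turns this into `B(2-s, s-1-z) = Γ(2-s) Γ(s-1-z) / Γ(1-z)`. The closed form is
meromorphic because `Γ` is. -/

open MeasureTheory Set Filter Topology

/-- The coefficients `c₀ = c₂ = 1`, `c₁ = 2`. -/
noncomputable def cCoef : ℕ → ℝ := fun j => if j = 1 then 2 else 1

/-- The meromorphic extension
`M(z) = (z/Γ(1-z)) ∑_{j=0}^{2} c_j Γ(2+j/3-σ) Γ(σ-j/3-1-z) / (σ-j/3-1)`. -/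
noncomputable def Mext (σ : ℝ) (z : ℂ) : ℂ :=
  z / Complex.Gamma (1 - z) *
    ∑ j ∈ Finset.range 3,
      (cCoef j : ℂ) * (Real.Gamma (2 + (j : ℝ) / 3 - σ) : ℂ)
        * Complex.Gamma ((σ : ℂ) - (j : ℝ) / 3 - 1 - z) / ((σ : ℂ) - (j : ℝ) / 3 - 1)

@[fun_prop]
lemma meromorphicAt_Gamma (z : ℂ) : MeromorphicAt Complex.Gamma z :=
  Meromorphic.Gamma z

lemma meromorphicOn_Mext (σ : ℝ) : MeromorphicOn (Mext σ) univ := fun z _ => by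
  unfold Mext
  fun_prop

lemma norm_ofReal_cpow_le_one {x : ℝ} (hx : 1 ≤ x) {w : ℂ} (hw : w.re ≤ 0) :
    ‖(x : ℂ) ^ w‖ ≤ 1 := by
  rw [Complex.norm_cpow_eq_rpow_re_of_pos (by linarith)]
  exact Real.rpow_le_one_of_one_le_of_nonpos hx hw

lemma hasDerivAt_one_add_cpow (z : ℂ) {t : ℝ} (ht : 0 < 1 + t) :
    HasDerivAt (fun y : ℝ => ((1 + y : ℝ) : ℂ) ^ z) (z * ((1 + t : ℝ) : ℂ) ^ (z - 1)) t := by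
  have h := ((hasDerivAt_id (t : ℂ)).const_add 1).cpow_const (c := z)
    (by simpa using (Complex.ofReal_mem_slitPlane.2 ht))
  simpa using h.comp_ofReal

lemma norm_one_add_cpow_sub_one_le_mul {z : ℂ} (hz : z.re ≤ 0) {η : ℝ} (hη : 0 ≤ η) :
    ‖((1 + η : ℝ) : ℂ) ^ z - 1‖ ≤ ‖z‖ * η := by
  have hderiv : ∀ t ∈ Ici (0 : ℝ), HasDerivWithinAt (fun t : ℝ => ((1 + t : ℝ) : ℂ) ^ z)
      (z * ((1 + t : ℝ) : ℂ) ^ (z - 1)) (Ici 0) t := fun t ht =>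
    (hasDerivAt_one_add_cpow z (by linarith [mem_Ici.1 ht])).hasDerivWithinAt
  have hbound : ∀ t ∈ Ici (0 : ℝ), ‖z * ((1 + t : ℝ) : ℂ) ^ (z - 1)‖ ≤ ‖z‖ := fun t ht => by
    rw [norm_mul]
    exact mul_le_of_le_one_right (norm_nonneg z)
      (norm_ofReal_cpow_le_one (by linarith [mem_Ici.1 ht])
        (by rw [Complex.sub_re, Complex.one_re]; linarith))
  simpa [abs_of_nonneg hη] using
    (convex_Ici 0).norm_image_sub_le_of_norm_hasDerivWithin_le hderiv hbound self_mem_Ici hη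

lemma norm_one_add_cpow_sub_one_le_two {z : ℂ} (hz : z.re ≤ 0) {η : ℝ} (hη : 0 ≤ η) :
    ‖((1 + η : ℝ) : ℂ) ^ z - 1‖ ≤ 2 := by
  calc ‖((1 + η : ℝ) : ℂ) ^ z - 1‖ ≤ ‖((1 + η : ℝ) : ℂ) ^ z‖ + ‖(1 : ℂ)‖ := norm_sub_le _ _
    _ ≤ 1 + 1 := by gcongr; exacts [norm_ofReal_cpow_le_one (by linarith) hz, norm_one.le]
    _ = 2 := by norm_num

lemma integral_Ioi_eq_integral_Ioo_div_one_sub {E : Type*} [NormedAddCommGroup E]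
    [NormedSpace ℝ E] (g : ℝ → E) :
    ∫ t in Ioi 0, g t = ∫ x in Ioo 0 1, ((1 - x) ^ 2)⁻¹ • g (x / (1 - x)) := by
  have hderiv : ∀ x ∈ Ioo (0 : ℝ) 1,
      HasDerivWithinAt (fun x => x / (1 - x)) ((1 - x) ^ 2)⁻¹ (Ioo 0 1) x := fun x hx => by
    have h := (hasDerivAt_id' x).fun_div ((hasDerivAt_id' x).const_sub 1) (by linarith [hx.2])
    exact h.hasDerivWithinAt.congr_deriv (by ring)
  have hinj : InjOn (fun x : ℝ => x / (1 - x)) (Ioo 0 1) := fun x hx y hy hxy => by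
    field_simp [show 1 - x ≠ 0 by linarith [hx.2], show 1 - y ≠ 0 by linarith [hy.2]] at hxy
    linarith
  have himage : (fun x : ℝ => x / (1 - x)) '' Ioo 0 1 = Ioi 0 := by
    refine Subset.antisymm (fun _ ⟨x, hx, hxt⟩ => hxt ▸ div_pos hx.1 (by linarith [hx.2]))
      (fun t (ht : 0 < t) => ⟨t / (1 + t), ⟨by positivity, ?_⟩, ?_⟩)
    · rw [div_lt_one (by linarith)]; linarith
    · field_simp
      ring
  rw [← himage, integral_image_eq_integral_abs_deriv_smul measurableSet_Ioo hderiv hinj]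
  refine setIntegral_congr_fun measurableSet_Ioo (fun x hx => ?_)
  rw [abs_of_pos (inv_pos.2 (pow_pos (by linarith [hx.2]) 2))]

lemma ofReal_cpow_eq_exp {a : ℝ} (ha : 0 < a) (w : ℂ) :
    (a : ℂ) ^ w = Complex.exp (Real.log a * w) := by
  rw [Complex.cpow_def_of_ne_zero (by exact_mod_cast ha.ne'), Complex.ofReal_log ha.le]

lemma smul_cpow_div_one_sub_mul_cpow {x : ℝ} (hx : x ∈ Ioo (0 : ℝ) 1) (p q : ℂ) :
    ((1 - x) ^ 2)⁻¹ • (((x / (1 - x) : ℝ) : ℂ) ^ (p - 1) * ((1 + x / (1 - x) : ℝ) : ℂ) ^ (-(p + q)))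
      = (x : ℂ) ^ (p - 1) * (1 - (x : ℂ)) ^ (q - 1) := by
  obtain ⟨hx0, hx1⟩ := hx
  have h1x : 0 < 1 - x := by linarith
  have hsq : (((1 - x) ^ 2)⁻¹ : ℝ) = (1 - x) ^ (-2 : ℝ) := by
    rw [Real.rpow_neg h1x.le, Real.rpow_two]
  have hone_add : 1 + x / (1 - x) = (1 - x)⁻¹ := by field_simp; ring
  have h1xc : 1 - (x : ℂ) = ((1 - x : ℝ) : ℂ) := by push_cast; ring
  rw [Complex.real_smul, hsq, hone_add, h1xc, Complex.ofReal_cpow h1x.le]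
  simp only [ofReal_cpow_eq_exp h1x, ofReal_cpow_eq_exp hx0, ofReal_cpow_eq_exp (div_pos hx0 h1x),
    ofReal_cpow_eq_exp (inv_pos.2 h1x), ← Complex.exp_add, Real.log_div hx0.ne' h1x.ne',
    Real.log_inv]
  congr 1
  push_cast
  ring

lemma integral_Ioi_cpow_mul_one_add_cpow {p q : ℂ} (hp : 0 < p.re) (hq : 0 < q.re) :
    ∫ t in Ioi (0 : ℝ), (t : ℂ) ^ (p - 1) * ((1 + t : ℝ) : ℂ) ^ (-(p + q))
      = Complex.Gamma p * Complex.Gamma q / Complex.Gamma (p + q) := by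
  rw [integral_Ioi_eq_integral_Ioo_div_one_sub, ← Complex.betaIntegral_eq_Gamma_mul_div p q hp hq,
    Complex.betaIntegral, intervalIntegral.integral_of_le zero_le_one,
    integral_Ioc_eq_integral_Ioo]
  exact setIntegral_congr_fun measurableSet_Ioo (fun x hx => smul_cpow_div_one_sub_mul_cpow hx p q)

lemma integrableOn_Ioi_zero_of_norm_le_rpow {E : Type*} [NormedAddCommGroup E] {f : ℝ → E}
    (hf : AEStronglyMeasurable f) {a b C D : ℝ} (ha : -1 < a) (hb : b < -1)
    (h0 : ∀ η ∈ Ioc (0 : ℝ) 1, ‖f η‖ ≤ C * η ^ a) (h1 : ∀ η ∈ Ioi (1 : ℝ), ‖f η‖ ≤ D * η ^ b) :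
    IntegrableOn f (Ioi 0) := by
  rw [← Ioc_union_Ioi_eq_Ioi zero_le_one, integrableOn_union]
  constructor
  · have hpow : IntegrableOn (fun η : ℝ => η ^ a) (Ioc 0 1) :=
      (intervalIntegrable_iff_integrableOn_Ioc_of_le zero_le_one).1
        (intervalIntegral.intervalIntegrable_rpow' ha)
    exact (hpow.const_mul C).mono' hf.restrict
      ((ae_restrict_iff' measurableSet_Ioc).2 (ae_of_all _ h0))
  · exact ((integrableOn_Ioi_rpow_of_lt hb one_pos).const_mul D).mono' hf.restrict
      ((ae_restrict_iff' measurableSet_Ioi).2 (ae_of_all _ h1))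

section

variable {s : ℝ} {z : ℂ}

lemma integrableOn_one_add_cpow_sub_one_mul_cpow (hs1 : 1 < s) (hs2 : s < 2) (hz : z.re ≤ 0) :
    IntegrableOn (fun η : ℝ => (((1 + η : ℝ) : ℂ) ^ z - 1) * (η : ℂ) ^ (-(s : ℂ))) (Ioi 0) := by
  refine integrableOn_Ioi_zero_of_norm_le_rpow (by fun_prop) (a := 1 - s) (b := -s)
    (C := ‖z‖) (D := 2) (by linarith) (by linarith) (fun η hη => ?_) (fun η hη => ?_)
  · have hη0 : 0 < η := hη.1
    rw [norm_mul, Complex.norm_cpow_eq_rpow_re_of_pos hη0, Complex.neg_re, Complex.ofReal_re]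
    calc ‖((1 + η : ℝ) : ℂ) ^ z - 1‖ * η ^ (-s) ≤ ‖z‖ * η * η ^ (-s) := by
          gcongr; exact norm_one_add_cpow_sub_one_le_mul hz hη0.le
      _ = ‖z‖ * η ^ (1 - s) := by
          rw [sub_eq_neg_add, Real.rpow_add_one hη0.ne']; ring
  · have hη0 : 0 < η := zero_lt_one.trans hη
    rw [norm_mul, Complex.norm_cpow_eq_rpow_re_of_pos hη0, Complex.neg_re, Complex.ofReal_re]
    gcongr; exact norm_one_add_cpow_sub_one_le_two hz hη0.le

lemma integrableOn_one_add_cpow_mul_cpow (hs1 : 1 < s) (hs2 : s < 2) (hz : z.re < 0) :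
    IntegrableOn (fun η : ℝ => ((1 + η : ℝ) : ℂ) ^ (z - 1) * (η : ℂ) ^ (1 - (s : ℂ))) (Ioi 0) := by
  have hre : (1 - (s : ℂ)).re = 1 - s := by simp
  refine integrableOn_Ioi_zero_of_norm_le_rpow (by fun_prop) (a := 1 - s) (b := z.re - s)
    (C := 1) (D := 1) (by linarith) (by linarith) (fun η hη => ?_) (fun η hη => ?_)
  · have hη0 : 0 < η := hη.1
    rw [norm_mul, Complex.norm_cpow_eq_rpow_re_of_pos hη0, hre, one_mul]
    exact mul_le_of_le_one_left (by positivity)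
      (norm_ofReal_cpow_le_one (by linarith) (by rw [Complex.sub_re, Complex.one_re]; linarith))
  · have hη0 : 0 < η := zero_lt_one.trans hη
    rw [norm_mul, Complex.norm_cpow_eq_rpow_re_of_pos hη0,
      Complex.norm_cpow_eq_rpow_re_of_pos (by linarith), hre, one_mul, Complex.sub_re,
      Complex.one_re]
    calc (1 + η) ^ (z.re - 1) * η ^ (1 - s) ≤ η ^ (z.re - 1) * η ^ (1 - s) := by
          exact mul_le_mul_of_nonneg_right
            (Real.rpow_le_rpow_of_nonpos hη0 (by linarith) (by linarith)) (by positivity)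
      _ = η ^ (z.re - s) := by rw [← Real.rpow_add hη0]; ring_nf

lemma tendsto_one_add_cpow_sub_one_mul_cpow_nhdsGT_zero (hs2 : s < 2) (hz : z.re ≤ 0) :
    Tendsto (fun η : ℝ => (((1 + η : ℝ) : ℂ) ^ z - 1) * (η : ℂ) ^ (1 - (s : ℂ))) (𝓝[>] 0)
      (𝓝 0) := by
  refine squeeze_zero_norm' (a := fun η : ℝ => ‖z‖ * η ^ (2 - s)) ?_ ?_
  · filter_upwards [self_mem_nhdsWithin] with η (hη : 0 < η)
    rw [norm_mul, Complex.norm_cpow_eq_rpow_re_of_pos hη, Complex.sub_re, Complex.one_re,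
      Complex.ofReal_re]
    calc ‖((1 + η : ℝ) : ℂ) ^ z - 1‖ * η ^ (1 - s) ≤ ‖z‖ * η * η ^ (1 - s) := by
          gcongr; exact norm_one_add_cpow_sub_one_le_mul hz hη.le
      _ = ‖z‖ * η ^ (2 - s) := by
          rw [show 2 - s = 1 - s + 1 by ring, Real.rpow_add_one hη.ne']; ring
  · have h : Tendsto (fun η : ℝ => ‖z‖ * η ^ (2 - s)) (𝓝[>] 0) (𝓝 (‖z‖ * 0 ^ (2 - s))) :=
      ((Real.continuousAt_rpow_const 0 (2 - s) (Or.inr (by linarith))).tendsto.const_mul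
        _).mono_left nhdsWithin_le_nhds
    rwa [Real.zero_rpow (by linarith), mul_zero] at h

lemma tendsto_one_add_cpow_sub_one_mul_cpow_atTop (hs1 : 1 < s) (hz : z.re ≤ 0) :
    Tendsto (fun η : ℝ => (((1 + η : ℝ) : ℂ) ^ z - 1) * (η : ℂ) ^ (1 - (s : ℂ))) atTop
      (𝓝 0) := by
  refine squeeze_zero_norm' (a := fun η : ℝ => 2 * η ^ (-(s - 1))) ?_ ?_
  · filter_upwards [eventually_gt_atTop 0] with η hη
    rw [norm_mul, Complex.norm_cpow_eq_rpow_re_of_pos hη, Complex.sub_re, Complex.one_re,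
      Complex.ofReal_re, neg_sub]
    gcongr; exact norm_one_add_cpow_sub_one_le_two hz hη.le
  · simpa using (tendsto_rpow_neg_atTop (by linarith : 0 < s - 1)).const_mul 2

lemma integral_one_add_cpow_sub_one_mul_cpow (hs1 : 1 < s) (hs2 : s < 2) (hz : z.re < 0) :
    ∫ η in Ioi 0, (((1 + η : ℝ) : ℂ) ^ z - 1) * (η : ℂ) ^ (-(s : ℂ))
      = z / (s - 1) * ∫ η in Ioi 0, ((1 + η : ℝ) : ℂ) ^ (z - 1) * (η : ℂ) ^ (1 - (s : ℂ)) := by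
  have hs : (s : ℂ) ≠ 1 := by exact_mod_cast hs1.ne'
  set u : ℝ → ℂ := fun η => ((1 + η : ℝ) : ℂ) ^ z - 1
  set v : ℝ → ℂ := fun η => (η : ℂ) ^ (1 - (s : ℂ)) / (1 - (s : ℂ))
  have hu : ∀ η ∈ Ioi (0 : ℝ), HasDerivAt u (z * ((1 + η : ℝ) : ℂ) ^ (z - 1)) η := fun η hη =>
    (hasDerivAt_one_add_cpow z (by linarith [mem_Ioi.1 hη])).sub_const 1
  have hv : ∀ η ∈ Ioi (0 : ℝ), HasDerivAt v ((η : ℂ) ^ (-(s : ℂ))) η := fun η hη => by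
    simpa only [neg_add_eq_sub] using hasDerivAt_ofReal_cpow_const' (ne_of_gt hη)
      (r := -(s : ℂ)) (neg_injective.ne hs)
  have huv : u * v = fun η => (((1 + η : ℝ) : ℂ) ^ z - 1) * (η : ℂ) ^ (1 - (s : ℂ)) / (1 - s) :=
    funext fun η => mul_div_assoc' _ _ _
  have h_zero : Tendsto (u * v) (𝓝[>] 0) (𝓝 0) := by
    rw [huv, ← zero_div (1 - (s : ℂ))]
    exact (tendsto_one_add_cpow_sub_one_mul_cpow_nhdsGT_zero hs2 hz.le).div_const _
  have h_infty : Tendsto (u * v) atTop (𝓝 0) := by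
    rw [huv, ← zero_div (1 - (s : ℂ))]
    exact (tendsto_one_add_cpow_sub_one_mul_cpow_atTop hs1 hz.le).div_const _
  have hu'v : IntegrableOn (fun η => z * ((1 + η : ℝ) : ℂ) ^ (z - 1) * v η) (Ioi 0) := by
    refine IntegrableOn.congr_fun
      ((integrableOn_one_add_cpow_mul_cpow hs1 hs2 hz).const_mul (z / (1 - s)))
      (fun η _ => ?_) measurableSet_Ioi
    simp only [v]; ring
  rw [integral_Ioi_mul_deriv_eq_deriv_mul hu hv
    (integrableOn_one_add_cpow_sub_one_mul_cpow hs1 hs2 hz.le) hu'v h_zero h_infty,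
    ← integral_const_mul]
  simp only [v, zero_sub, sub_zero, ← integral_neg]
  refine setIntegral_congr_fun measurableSet_Ioi (fun η _ => ?_)
  field_simp
  ring

lemma integral_one_add_cpow_sub_one_mul_rpow (hs1 : 1 < s) (hs2 : s < 2) (hz : z.re < 0) :
    ∫ η in Ioi 0, (((1 + η : ℝ) : ℂ) ^ z - 1) * ((η ^ (-s) : ℝ) : ℂ)
      = z / Complex.Gamma (1 - z) *
        (Real.Gamma (2 - s) * Complex.Gamma (s - 1 - z) / (s - 1)) := by
  have hp : 0 < (2 - (s : ℂ)).re := by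
    rw [Complex.sub_re, Complex.re_ofNat, Complex.ofReal_re]; linarith
  have hq : 0 < ((s : ℂ) - 1 - z).re := by
    rw [Complex.sub_re, Complex.sub_re, Complex.one_re, Complex.ofReal_re]; linarith
  have hbeta := integral_Ioi_cpow_mul_one_add_cpow hp hq
  rw [show 2 - (s : ℂ) + (s - 1 - z) = 1 - z by ring] at hbeta
  have hJ : ∫ η in Ioi 0, ((1 + η : ℝ) : ℂ) ^ (z - 1) * (η : ℂ) ^ (1 - (s : ℂ))
      = Complex.Gamma (2 - s) * Complex.Gamma (s - 1 - z) / Complex.Gamma (1 - z) := by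
    rw [← hbeta]
    refine setIntegral_congr_fun measurableSet_Ioi (fun η _ => ?_)
    rw [mul_comm, neg_sub, show 2 - (s : ℂ) - 1 = 1 - s by ring]
  rw [setIntegral_congr_fun measurableSet_Ioi (fun η (hη : 0 < η) => by
      rw [Complex.ofReal_cpow hη.le, Complex.ofReal_neg]),
    integral_one_add_cpow_sub_one_mul_cpow hs1 hs2 hz, hJ, ← Complex.Gamma_ofReal,
    Complex.ofReal_sub, Complex.ofReal_ofNat]
  ring

end

theorem stmt11 (σ : ℝ) (hσ : σ ∈ Ioo (5/3 : ℝ) 2) :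
    (∀ z : ℂ, z.re < 0 →
      (∑ j ∈ Finset.range 3, (cCoef j : ℂ) *
        ∫ η in Ioi (0:ℝ), (((1 + η : ℝ) : ℂ) ^ z - 1) * ((η ^ (-(σ - (j : ℝ) / 3)) : ℝ) : ℂ))
        = Mext σ z) ∧
    MeromorphicOn (Mext σ) Set.univ := by
  refine ⟨fun z hz => ?_, meromorphicOn_Mext σ⟩
  rw [Mext, Finset.mul_sum]
  refine Finset.sum_congr rfl (fun j hj => ?_)
  have hj2 : (j : ℝ) ≤ 2 := by exact_mod_cast Nat.lt_succ_iff.mp (Finset.mem_range.mp hj)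
  have hj0 : (0 : ℝ) ≤ j := j.cast_nonneg
  rw [integral_one_add_cpow_sub_one_mul_rpow (by linarith [hσ.1]) (by linarith [hσ.2]) hz,
    show 2 - (σ - j / 3) = 2 + j / 3 - σ by ring]
  push_cast
  ring
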